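/- arXiv:math/0410431 — 3 statements merged into one kernel-verified Lean document; each statement's English description precedes it below -/
import Mathlib

section
/- Let A0 be a bounded self-adjoint operator on a Hilbert space H with 0 an isolated point of its spectrum, and let S be the Riesz (spectral) projection of A0 at 0, with rank(S) < ∞. Let A(z) = A0 + z A1(z) for z in a set F ⊂ ℂ\{0} accumulating at 0, with A1(z) uniformly bounded as z → 0. Then for sufficiently small z ∈ F, A(z) + S is invertible and the operators B(z) := z^{-1}(S − S(A(z)+S)^{-1}S) are well-defined, bounded, and uniformly bounded as z → 0. -/
open Filter in
lemma aux_unit {H : Type*} [NormedAddCommGroup H] [InnerProductSpace ℂ H] [CompleteSpace H]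
    (A0 : H →L[ℂ] H) (hA0 : IsSelfAdjoint A0)
    (ε : ℝ) (hε : 0 < ε) (hgap : ∀ z ∈ spectrum ℂ A0, z ≠ 0 → ε ≤ ‖z‖)
    (S : H →L[ℂ] H) (hSidem : S * S = S) (hSsa : IsSelfAdjoint S)
    (hSrange : ∀ x, A0 (S x) = 0) (hSker : ∀ x, A0 x = 0 → S x = x) :
    IsUnit (A0 + S) := by
  have hAS : A0 * S = 0 := by ext x; exact hSrange x
  have hgapR : ∀ t ∈ spectrum ℝ A0, t ≠ 0 → ε ≤ |t| := by
    intro t ht ht0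
    have h1 : (algebraMap ℝ ℂ t) ∈ spectrum ℂ A0 := by
      rw [← hA0.spectrumRestricts.algebraMap_image]; exact ⟨t, ht, rfl⟩
    have h2 := hgap _ h1 (by simpa using ht0)
    simpa using h2
  set f : ℝ → ℝ := fun t => max 0 (1 - |t| / ε) with hf_def
  have hf_cont : Continuous f := continuous_const.max (by fun_prop)
  have hf0 : f 0 = 1 := by simp [hf_def]
  have hf_big : ∀ t : ℝ, ε ≤ |t| → f t = 0 := by
    intro t ht
    have h1 : 1 - |t| / ε ≤ 0 := by
      rw [sub_nonpos, le_div_iff₀ hε]; nlinarith [abs_nonneg t]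
    simp [hf_def, max_eq_left h1]
  set P := cfc f A0 with hP_def
  have hPsa : IsSelfAdjoint P := cfc_predicate f A0
  have hA0P : A0 * P = 0 := by
    conv_lhs => rw [← cfc_id ℝ A0 hA0]
    rw [← cfc_mul _ _ A0 (continuous_id.continuousOn) hf_cont.continuousOn]
    rw [← cfc_zero ℝ A0]
    apply cfc_congr
    intro t ht
    rcases eq_or_ne t 0 with rfl | h
    · simp
    · simp [hf_big t (hgapR t ht h)]
  have hSP : S * P = P := by
    ext x
    exact hSker (P x) (by simpa using congrFun (congrArg (fun T : H →L[ℂ] H => (T : H → H)) hA0P) x)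
  set k : ℝ → ℝ := fun t => if t = 0 then 0 else (1 - f t) / t with hk_def
  have hk : ContinuousOn k (spectrum ℝ A0) := by
    intro t ht
    rcases eq_or_ne t 0 with rfl | h
    · have hev : ∀ᶠ t' in nhdsWithin 0 (spectrum ℝ A0), k t' = 0 := by
        filter_upwards [self_mem_nhdsWithin,
          nhdsWithin_le_nhds (Metric.ball_mem_nhds (0 : ℝ) hε)] with t' h1 h2
        have ht' : t' = 0 := by
          by_contra hne
          have := hgapR t' h1 hne
          rw [Metric.mem_ball, Real.dist_eq, sub_zero] at h2
          linarith
        simp [hk_def, ht']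
      have h0 : k 0 = 0 := by simp [hk_def]
      unfold ContinuousWithinAt
      rw [h0]
      exact Filter.Tendsto.congr' (hev.mono fun _ h => h.symm) tendsto_const_nhds
    · apply ContinuousAt.continuousWithinAt
      have hg : ContinuousAt (fun t : ℝ => (1 - f t) / t) t :=
        ((continuous_const.sub hf_cont).continuousAt).div continuousAt_id h
      apply hg.congr
      filter_upwards [isOpen_ne.mem_nhds h] with t' ht'
      simp [hk_def, ht']
  have hkA : cfc k A0 * A0 = 1 - P := by
    nth_rewrite 2 [← cfc_id ℝ A0 hA0]
    rw [← cfc_mul k _ A0 hk continuous_id.continuousOn]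
    simp only [id_eq]
    have h1 : cfc (fun t : ℝ => k t * t) A0 = cfc (fun t : ℝ => 1 - f t) A0 := by
      apply cfc_congr
      intro t ht
      rcases eq_or_ne t 0 with rfl | h
      · simp [hk_def, hf0]
      · simp [hk_def, h, div_mul_cancel₀ _ h]
    rw [h1, cfc_sub _ _ A0 continuous_const.continuousOn hf_cont.continuousOn]
    congr 1
    exact cfc_one ℝ A0
  have hPS : P * S = S := by
    ext x
    have h1 : (cfc k A0 * A0) (S x) = (1 - P) (S x) := by rw [hkA]
    have h2 : (cfc k A0 * A0) (S x) = 0 := by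
      have : A0 (S x) = 0 := hSrange x
      simp [ContinuousLinearMap.mul_apply, this]
    have h3 : (1 - P) (S x) = S x - P (S x) := by simp
    have := h1.symm.trans h2
    rw [h3] at this
    have h4 := sub_eq_zero.mp this
    simpa using h4.symm
  have hPS' : P * S = P := by
    have h := congrArg star hSP
    rwa [star_mul, hPsa.star_eq, hSsa.star_eq] at h
  have hSeqP : S = P := by rw [← hPS, hPS']
  rw [hSeqP]
  have hsum : A0 + P = cfc (fun t : ℝ => t + f t) A0 := by
    rw [cfc_add (a := A0) (fun t : ℝ => t) f continuous_id.continuousOn hf_cont.continuousOn,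
      cfc_id' ℝ A0 hA0]
  rw [hsum]
  refine isUnit_cfc _ A0 (continuous_id.add hf_cont).continuousOn hA0 ?_
  intro t ht
  rcases eq_or_ne t 0 with rfl | h
  · simp [hf0]
  · rw [hf_big t (hgapR t ht h), add_zero]
    exact h

/-- **Jensen–Nenciu lemma, first part.** Let `A0` be a bounded self-adjoint operator on a
complex Hilbert space with `0` an isolated point of its spectrum, and let `S` be the Riesz
projection of `A0` at `0` (the orthogonal projection onto `ker A0`), with finite rank.
Let `A(z) = A0 + z • A1 z` for `z ∈ F ⊆ ℂ \ {0}` accumulating at `0`, with `A1 z` uniformly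
bounded. Then for sufficiently small `z ∈ F` the operator `A(z) + S` is invertible, and the
operators `B(z) = z⁻¹ • (S − S (A(z)+S)⁻¹ S)` are well-defined, bounded, and uniformly
bounded as `z → 0`. -/
theorem stmt0 {H : Type*} [NormedAddCommGroup H] [InnerProductSpace ℂ H] [CompleteSpace H]
    (A0 : H →L[ℂ] H) (hA0 : IsSelfAdjoint A0)
    (hspec : (0 : ℂ) ∈ spectrum ℂ A0)
    (hiso : ∃ ε > 0, ∀ z ∈ spectrum ℂ A0, z ≠ 0 → ε ≤ ‖z‖)
    (S : H →L[ℂ] H) (hSidem : S * S = S) (hSsa : IsSelfAdjoint S)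
    (hSrange : ∀ x, A0 (S x) = 0) (hSker : ∀ x, A0 x = 0 → S x = x)
    (hfin : FiniteDimensional ℂ (LinearMap.ker (A0 : H →ₗ[ℂ] H)))
    (F : Set ℂ) (hF : (0 : ℂ) ∉ F) (hacc : (0 : ℂ) ∈ closure F)
    (A1 : ℂ → (H →L[ℂ] H)) (C1 : ℝ) (hA1 : ∀ z ∈ F, ‖A1 z‖ ≤ C1) :
    ∃ δ > 0, (∀ z ∈ F, ‖z‖ < δ → IsUnit (A0 + z • A1 z + S)) ∧
      ∃ M : ℝ, ∀ z ∈ F, ‖z‖ < δ →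
        ‖z⁻¹ • (S - S * Ring.inverse (A0 + z • A1 z + S) * S)‖ ≤ M := by
  obtain ⟨ε, hε, hgap⟩ := hiso
  have hTunit : IsUnit (A0 + S) := aux_unit A0 hA0 ε hε hgap S hSidem hSsa hSrange hSker
  set T := A0 + S with hT_def
  set Ti := Ring.inverse T with hTi_def
  have hTTi : T * Ti = 1 := Ring.mul_inverse_cancel T hTunit
  have hAS : A0 * S = 0 := by ext x; exact hSrange x
  have hTS : T * S = S := by rw [hT_def, add_mul, hAS, hSidem, zero_add]
  have hC1 : 0 ≤ C1 := by
    obtain ⟨z₀, hz₀⟩ : F.Nonempty := by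
      by_contra h
      rw [Set.not_nonempty_iff_eq_empty] at h
      rw [h] at hacc
      simp at hacc
    exact le_trans (norm_nonneg _) (hA1 z₀ hz₀)
  have hTi0 : (0:ℝ) ≤ ‖Ti‖ := norm_nonneg _
  set δ : ℝ := (2 * (‖Ti‖ + 1) * (C1 + 1))⁻¹ with hδ_def
  have hδprod : 0 < 2 * (‖Ti‖ + 1) * (C1 + 1) := by positivity
  have hδpos : 0 < δ := by positivity
  have hδeq : δ * (2 * (‖Ti‖ + 1) * (C1 + 1)) = 1 := inv_mul_cancel₀ (ne_of_gt hδprod)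
  have hsmall : ∀ z ∈ F, ‖z‖ < δ → ‖z‖ * ‖A1 z‖ * ‖Ti‖ < 1/2 := by
    intro z hz hzδ
    have h1 : ‖A1 z‖ ≤ C1 := hA1 z hz
    have h2 : (0:ℝ) ≤ ‖z‖ := norm_nonneg z
    have h3 : (0:ℝ) ≤ ‖A1 z‖ := norm_nonneg _
    have key : ‖z‖ * (2 * (‖Ti‖ + 1) * (C1 + 1)) < 1 := by
      calc ‖z‖ * (2 * (‖Ti‖ + 1) * (C1 + 1)) < δ * (2 * (‖Ti‖ + 1) * (C1 + 1)) :=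
            mul_lt_mul_of_pos_right hzδ hδprod
        _ = 1 := hδeq
    nlinarith [mul_le_mul_of_nonneg_left h1 h2, mul_le_mul_of_nonneg_right h1 h2]
  have hUnitAz : ∀ z ∈ F, ‖z‖ < δ → IsUnit (A0 + z • A1 z + S) := by
    intro z hz hzδ
    set V := Ti * (z • A1 z) with hV_def
    have hVn : ‖V‖ < 1/2 := by
      calc ‖V‖ ≤ ‖Ti‖ * ‖z • A1 z‖ := norm_mul_le _ _
        _ = ‖Ti‖ * (‖z‖ * ‖A1 z‖) := by rw [norm_smul]
        _ = ‖z‖ * ‖A1 z‖ * ‖Ti‖ := by ring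
        _ < 1/2 := hsmall z hz hzδ
    have hVunit : IsUnit (1 + V) := by
      have h := (Units.oneSub (-V) (by rw [norm_neg]; linarith)).isUnit
      simpa [sub_neg_eq_add] using h
    have hfact : A0 + z • A1 z + S = T * (1 + V) := by
      rw [hV_def, mul_add, mul_one, ← mul_assoc, hTTi, one_mul, hT_def]
      abel
    rw [hfact]
    exact hTunit.mul hVunit
  refine ⟨δ, hδpos, hUnitAz, ‖S‖ * (2 * ‖Ti‖) * C1 * ‖S‖, ?_⟩
  intro z hz hzδ
  have hz0 : z ≠ 0 := fun h => hF (h ▸ hz)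
  have hu := hUnitAz z hz hzδ
  set Az := A0 + z • A1 z + S with hAz_def
  set R := Ring.inverse Az with hR_def
  have hRAz : R * Az = 1 := Ring.inverse_mul_cancel Az hu
  have hAzT : Az = T + z • A1 z := by rw [hAz_def, hT_def]; abel
  have e1 : R * T + R * (z • A1 z) = 1 := by rw [← mul_add, ← hAzT, hRAz]
  have e2 : R = Ti - R * (z • A1 z) * Ti := by
    have h := congrArg (fun W => W * Ti) e1
    simp only [add_mul, one_mul] at h
    rw [mul_assoc R T Ti, hTTi, mul_one] at h
    exact eq_sub_of_add_eq h
  have hRn : ‖R‖ ≤ 2 * ‖Ti‖ := by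
    have h1 : ‖R‖ ≤ ‖Ti‖ + ‖R‖ * (‖z‖ * ‖A1 z‖ * ‖Ti‖) := by
      calc ‖R‖ = ‖Ti - R * (z • A1 z) * Ti‖ := by rw [← e2]
        _ ≤ ‖Ti‖ + ‖R * (z • A1 z) * Ti‖ := norm_sub_le _ _
        _ ≤ ‖Ti‖ + ‖R‖ * (‖z‖ * ‖A1 z‖ * ‖Ti‖) := by
            have hb : ‖R * (z • A1 z) * Ti‖ ≤ ‖R‖ * (‖z‖ * ‖A1 z‖ * ‖Ti‖) := by
              calc ‖R * (z • A1 z) * Ti‖ ≤ ‖R * (z • A1 z)‖ * ‖Ti‖ := norm_mul_le _ _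
                _ ≤ (‖R‖ * ‖z • A1 z‖) * ‖Ti‖ :=
                    mul_le_mul_of_nonneg_right (norm_mul_le _ _) (norm_nonneg _)
                _ = ‖R‖ * (‖z‖ * ‖A1 z‖ * ‖Ti‖) := by rw [norm_smul]; ring
            linarith
    have h2 := hsmall z hz hzδ
    nlinarith [norm_nonneg R]
  have c1 : S * R * Az * S = S := by
    rw [mul_assoc S R Az, hRAz, mul_one, hSidem]
  have c2 : S * R * Az * S = S * R * S + z • (S * R * A1 z * S) := by
    rw [hAzT, mul_add, add_mul, mul_assoc (S * R) T S, hTS]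
    congr 1
    rw [mul_smul_comm, smul_mul_assoc]
  have key : S - S * R * S = z • (S * R * A1 z * S) :=
    sub_eq_iff_eq_add'.mpr (c1.symm.trans c2)
  rw [key, smul_smul, inv_mul_cancel₀ hz0, one_smul]
  calc ‖S * R * A1 z * S‖ ≤ ‖S * R * A1 z‖ * ‖S‖ := norm_mul_le _ _
    _ ≤ (‖S * R‖ * ‖A1 z‖) * ‖S‖ :=
        mul_le_mul_of_nonneg_right (norm_mul_le _ _) (norm_nonneg _)
    _ ≤ ((‖S‖ * ‖R‖) * ‖A1 z‖) * ‖S‖ := by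
        gcongr
        exact norm_mul_le _ _
    _ ≤ ‖S‖ * (2 * ‖Ti‖) * C1 * ‖S‖ := by
        have h1 : ‖A1 z‖ ≤ C1 := hA1 z hz
        gcongr
end

section
/- With the setup of the Jensen–Nenciu lemma (A(z) = A0 + zA1(z), S the finite-rank Riesz projection of A0 at the isolated spectral point 0, z small so that A(z)+S is invertible, B(z) = z^{-1}(S − S(A(z)+S)^{-1}S)): A(z) has a bounded inverse on H if and only if B(z) has a bounded inverse on SH, and in that case A(z)^{-1} = (A(z)+S)^{-1} + z^{-1}(A(z)+S)^{-1} S B(z)^{-1} S (A(z)+S)^{-1}. -/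
private lemma isUnit_one_sub_swap {R : Type*} [Ring R] {a b : R} (h : IsUnit (1 - a * b)) :
    IsUnit (1 - b * a) := by
  obtain ⟨u, hu⟩ := h
  have h1 : (1 - a * b) * (↑u⁻¹ : R) = 1 := by rw [← hu]; exact u.mul_inv
  have h2 : (↑u⁻¹ : R) * (1 - a * b) = 1 := by rw [← hu]; exact u.inv_mul
  refine ⟨⟨1 - b * a, 1 + b * ↑u⁻¹ * a, ?_, ?_⟩, rfl⟩
  · have e : (1 - b * a) * (1 + b * ↑u⁻¹ * a)
        = 1 + b * ((1 - a * b) * ↑u⁻¹ - 1) * a := by noncomm_ring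
    rw [e, h1]; simp
  · have e : (1 + b * ↑u⁻¹ * a) * (1 - b * a)
        = 1 + b * (↑u⁻¹ * (1 - a * b) - 1) * a := by noncomm_ring
    rw [e, h2]; simp

/-- **Jensen–Nenciu lemma, second part.** With `A(z) = A0 + z A1(z)`, `S` the finite-rank
Riesz projection of the self-adjoint operator `A0` at the isolated spectral point `0`, and
`z` small enough that `A(z) + S` is boundedly invertible, set
`B(z) = z⁻¹ (S − S (A(z)+S)⁻¹ S)`. Then `A(z)` has a bounded inverse on `H` if and only if
`B(z)` has a bounded inverse on `S H` (an operator `D` with `S D S = D`, `B D = D B = S`),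
and in that case
`A(z)⁻¹ = (A(z)+S)⁻¹ + z⁻¹ (A(z)+S)⁻¹ S B(z)⁻¹ S (A(z)+S)⁻¹`. -/
theorem stmt1 {H : Type*} [NormedAddCommGroup H] [InnerProductSpace ℂ H] [CompleteSpace H]
    (A0 : H →L[ℂ] H) (hA0 : IsSelfAdjoint A0)
    (hspec : (0 : ℂ) ∈ spectrum ℂ A0)
    (hiso : ∃ ε > 0, ∀ ζ ∈ spectrum ℂ A0, ζ ≠ 0 → ε ≤ ‖ζ‖)
    (S : H →L[ℂ] H) (hSidem : S * S = S) (hSsa : IsSelfAdjoint S)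
    (hSrange : ∀ x, A0 (S x) = 0) (hSker : ∀ x, A0 x = 0 → S x = x)
    (hfin : FiniteDimensional ℂ (LinearMap.ker (A0 : H →ₗ[ℂ] H)))
    (A1 : ℂ → (H →L[ℂ] H)) (z : ℂ) (hz : z ≠ 0)
    (hASunit : IsUnit (A0 + z • A1 z + S)) :
    (IsUnit (A0 + z • A1 z) ↔
      ∃ D : H →L[ℂ] H, S * D * S = D ∧
        (z⁻¹ • (S - S * Ring.inverse (A0 + z • A1 z + S) * S)) * D = S ∧
        D * (z⁻¹ • (S - S * Ring.inverse (A0 + z • A1 z + S) * S)) = S) ∧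
    ∀ D : H →L[ℂ] H, S * D * S = D →
      (z⁻¹ • (S - S * Ring.inverse (A0 + z • A1 z + S) * S)) * D = S →
      D * (z⁻¹ • (S - S * Ring.inverse (A0 + z • A1 z + S) * S)) = S →
      Ring.inverse (A0 + z • A1 z) =
        Ring.inverse (A0 + z • A1 z + S) +
          z⁻¹ • (Ring.inverse (A0 + z • A1 z + S) * S * D * S *
            Ring.inverse (A0 + z • A1 z + S)) := by
  set A := A0 + z • A1 z with hAdef
  set T := A + S with hTdef
  set R := Ring.inverse T with hRdef
  have hTR : T * R = 1 := Ring.mul_inverse_cancel _ hASunit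
  have hRT : R * T = 1 := Ring.inverse_mul_cancel _ hASunit
  have hAT : A = T - S := by rw [hTdef]; abel
  have hS3 : ∀ X : H →L[ℂ] H, S * (S * X) = S * X := fun X => by rw [← mul_assoc, hSidem]
  have hT4 : ∀ X : H →L[ℂ] H, T * (R * X) = X := fun X => by rw [← mul_assoc, hTR, one_mul]
  have hR5 : ∀ X : H →L[ℂ] H, R * (T * X) = X := fun X => by rw [← mul_assoc, hRT, one_mul]
  have key : ∀ D : H →L[ℂ] H, S * D * S = D →
      (z⁻¹ • (S - S * R * S)) * D = S →
      D * (z⁻¹ • (S - S * R * S)) = S →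
      A * (R + z⁻¹ • (R * S * D * S * R)) = 1 ∧
      (R + z⁻¹ • (R * S * D * S * R)) * A = 1 := by
    intro D hD hBD hDB
    have hSD : S * D = D := by rw [← hD]; simp only [← mul_assoc, hSidem]
    have hDS : D * S = D := by rw [← hD, mul_assoc, hSidem]
    have hSD' : ∀ X : H →L[ℂ] H, S * (D * X) = D * X := fun X => by rw [← mul_assoc, hSD]
    have hDS' : ∀ X : H →L[ℂ] H, D * (S * X) = D * X := fun X => by rw [← mul_assoc, hDS]
    have hBD' : (S - S * R * S) * D = z • S := by
      rw [smul_mul_assoc] at hBD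
      calc (S - S * R * S) * D = z • (z⁻¹ • ((S - S * R * S) * D)) := by
            rw [smul_smul, mul_inv_cancel₀ hz, one_smul]
        _ = z • S := by rw [hBD]
    have hDB' : D * (S - S * R * S) = z • S := by
      rw [mul_smul_comm] at hDB
      calc D * (S - S * R * S) = z • (z⁻¹ • (D * (S - S * R * S))) := by
            rw [smul_smul, mul_inv_cancel₀ hz, one_smul]
        _ = z • S := by rw [hDB]
    constructor
    · have e1 : A * (R * S * D * S * R) = (S - S * R * S) * D * R := by
        rw [hAT]
        simp only [sub_mul, mul_assoc, hT4, hS3, hSD', hDS', hSD, hDS]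
      rw [mul_add, mul_smul_comm, e1, hBD', smul_mul_assoc, smul_smul,
        inv_mul_cancel₀ hz, one_smul, hAT, sub_mul, hTR, sub_add_cancel]
    · have e2 : (R * S * D * S * R) * A = R * (D * (S - S * R * S)) := by
        rw [hAT]
        simp only [mul_sub, mul_assoc, hRT, mul_one, hSD, hDS, hSD', hDS', hS3]
      rw [add_mul, smul_mul_assoc, e2, hDB', mul_smul_comm, smul_smul,
        inv_mul_cancel₀ hz, one_smul, hAT, mul_sub, hRT, sub_add_cancel]
  constructor
  · constructor
    · intro hU
      have hRunit : IsUnit R := ⟨⟨R, T, hRT, hTR⟩, rfl⟩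
      have h1 : IsUnit (1 - R * S) := by
        have e : (1 : H →L[ℂ] H) - R * S = R * A := by rw [hAT, mul_sub, hRT]
        rw [e]; exact hRunit.mul hU
      have h1' : IsUnit (1 - R * S * S) := by rwa [mul_assoc, hSidem]
      have h2 : IsUnit (1 - S * (R * S)) := isUnit_one_sub_swap h1'
      obtain ⟨u, hu⟩ := h2
      set N := (↑u⁻¹ : H →L[ℂ] H) with hNdef
      have hMN : (1 - S * (R * S)) * N = 1 := by rw [← hu]; exact u.mul_inv
      have hNM : N * (1 - S * (R * S)) = 1 := by rw [← hu]; exact u.inv_mul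
      refine ⟨z • (S * N * S), ?_, ?_, ?_⟩
      · rw [mul_smul_comm, smul_mul_assoc]
        congr 1
        simp only [mul_assoc, hSidem, hS3]
      · rw [smul_mul_assoc, mul_smul_comm, smul_smul, inv_mul_cancel₀ hz, one_smul]
        have lhs_eq : (S - S * R * S) * (S * N * S) = S * ((1 - S * (R * S)) * N) * S := by
          simp only [sub_mul, mul_sub, one_mul, mul_one, mul_assoc, hS3, hSidem]
        rw [lhs_eq, hMN, mul_one, hSidem]
      · rw [smul_mul_assoc, mul_smul_comm, smul_smul, mul_inv_cancel₀ hz, one_smul]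
        have lhs_eq : (S * N * S) * (S - S * R * S) = S * (N * (1 - S * (R * S))) * S := by
          simp only [sub_mul, mul_sub, one_mul, mul_one, mul_assoc, hS3, hSidem]
        rw [lhs_eq, hNM, mul_one, hSidem]
    · rintro ⟨D, hD, hBD, hDB⟩
      obtain ⟨hAC, hCA⟩ := key D hD hBD hDB
      exact ⟨⟨A, R + z⁻¹ • (R * S * D * S * R), hAC, hCA⟩, rfl⟩
  · intro D hD hBD hDB
    obtain ⟨hAC, hCA⟩ := key D hD hBD hDB
    exact Ring.inverse_unit (⟨A, R + z⁻¹ • (R * S * D * S * R), hAC, hCA⟩ : (H →L[ℂ] H)ˣ)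
end

section
/- If B(z) is invertible on SH, then the operator D(z) := z(S + S A(z)^{-1} S), when A(z) is invertible, satisfies B(z)D(z) = D(z)B(z) = S; that is, D(z) is the inverse of B(z) on SH. -/
lemma jn_aux1 {R : Type*} [Ring R] (S T r : R) (hS : S*S = S) (h : T + T*S*r = r) :
    (S - S*T*S) * (S + S*r*S) = S := by
  have hS2 : ∀ x : R, S * (S * x) = S * x := fun x => by rw [← mul_assoc, hS]
  have h' := congrArg (fun x => S*(x*S)) h
  simp only [add_mul, mul_add, mul_assoc, hS2] at h'
  simp only [mul_sub, sub_mul, mul_add, add_mul, mul_assoc, hS2, hS]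
  calc S - S*(T*S) + (S*(r*S) - S*(T*(S*(r*S))))
      = S + S*(r*S) - (S*(T*S) + S*(T*(S*(r*S)))) := by abel
    _ = S + S*(r*S) - S*(r*S) := by rw [h']
    _ = S := by abel

lemma jn_aux2 {R : Type*} [Ring R] (S T r : R) (hS : S*S = S) (h : T + r*S*T = r) :
    (S + S*r*S) * (S - S*T*S) = S := by
  have hS2 : ∀ x : R, S * (S * x) = S * x := fun x => by rw [← mul_assoc, hS]
  have h' := congrArg (fun x => S*(x*S)) h
  simp only [add_mul, mul_add, mul_assoc, hS2] at h'
  simp only [mul_sub, sub_mul, mul_add, add_mul, mul_assoc, hS2, hS]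
  rw [h']
  abel

/-- If `B(z)` is invertible on `S H` then, when `A(z)` is invertible, the operator
`D(z) := z (S + S A(z)⁻¹ S)` satisfies `B(z) D(z) = D(z) B(z) = S`; that is, `D(z)` is the
inverse of `B(z)` on `S H`. Here `B(z) = z⁻¹ (S − S (A(z)+S)⁻¹ S)` with `S` a projection
and `A(z) + S` boundedly invertible. -/
theorem stmt2 {H : Type*} [NormedAddCommGroup H] [InnerProductSpace ℂ H] [CompleteSpace H]
    (A S : H →L[ℂ] H) (z : ℂ) (hz : z ≠ 0) (hSidem : S * S = S)
    (hAS : IsUnit (A + S)) (hA : IsUnit A)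
    (hBinv : ∃ E : H →L[ℂ] H, S * E * S = E ∧
      (z⁻¹ • (S - S * Ring.inverse (A + S) * S)) * E = S ∧
      E * (z⁻¹ • (S - S * Ring.inverse (A + S) * S)) = S) :
    (z⁻¹ • (S - S * Ring.inverse (A + S) * S)) * (z • (S + S * Ring.inverse A * S)) = S ∧
    (z • (S + S * Ring.inverse A * S)) * (z⁻¹ • (S - S * Ring.inverse (A + S) * S)) = S := by
  set T := Ring.inverse (A + S) with hTdef
  set r := Ring.inverse A with hrdef
  have hT1 : (A + S) * T = 1 := Ring.mul_inverse_cancel _ hAS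
  have hT2 : T * (A + S) = 1 := Ring.inverse_mul_cancel _ hAS
  have hR1 : A * r = 1 := Ring.mul_inverse_cancel _ hA
  have hR2 : r * A = 1 := Ring.inverse_mul_cancel _ hA
  have key1 : T + r * S * T = r := by
    calc T + r * S * T = r * A * T + r * S * T := by rw [hR2, one_mul]
      _ = r * ((A + S) * T) := by noncomm_ring
      _ = r := by rw [hT1, mul_one]
  have key2 : T + T * S * r = r := by
    calc T + T * S * r = T * (A * r) + T * S * r := by rw [hR1, mul_one]
      _ = T * (A + S) * r := by noncomm_ring
      _ = r := by rw [hT2, one_mul]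
  have hsmul : ∀ X Y : H →L[ℂ] H, (z⁻¹ • X) * (z • Y) = X * Y := by
    intro X Y
    rw [smul_mul_assoc, mul_smul_comm, smul_smul, inv_mul_cancel₀ hz, one_smul]
  have hsmul' : ∀ X Y : H →L[ℂ] H, (z • Y) * (z⁻¹ • X) = Y * X := by
    intro X Y
    rw [smul_mul_assoc, mul_smul_comm, smul_smul, mul_inv_cancel₀ hz, one_smul]
  constructor
  · rw [hsmul]
    exact jn_aux1 S T r hSidem key2
  · rw [hsmul']
    exact jn_aux2 S T r hSidem key1
end
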